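/- Consider the Matoušek USO m₁ of the 3-cube whose dimension influence graph has non-loop edges (1,2) and (2,3) only (a path without the transitive edge). Then m₁, viewed as an orientation of the 3-cube, does not admit three vertex-disjoint directed paths from its unique source to its unique sink. -/

import Mathlib

open scoped symmDiff

/-- An orientation of the `3`-cube. -/
def IsOrientation (o : Finset (Fin 3) → Finset (Fin 3)) : Prop :=
  ∀ (v : Finset (Fin 3)) (d : Fin 3), d ∈ o v ↔ d ∉ o (v ∆ {d})

/-- A directed step along an outgoing edge of the cube orientation `o`. -/
def Step (o : Finset (Fin 3) → Finset (Fin 3)) (v w : Finset (Fin 3)) : Prop :=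
  ∃ d, d ∈ o v ∧ w = v ∆ {d}

/-- `s :: p` is a directed path from `s` to `t` in the orientation `o`. -/
def IsPathFrom (o : Finset (Fin 3) → Finset (Fin 3)) (s t : Finset (Fin 3))
    (p : List (Finset (Fin 3))) : Prop :=
  List.Chain (Step o) s p ∧ (s :: p).getLast (List.cons_ne_nil s p) = t

/-- Existence of three directed paths from `s` to `t`, pairwise vertex-disjoint
except at `s` and `t`. -/
def ThreeDisjointPaths (o : Finset (Fin 3) → Finset (Fin 3))
    (s t : Finset (Fin 3)) : Prop :=
  ∃ p₁ p₂ p₃ : List (Finset (Fin 3)),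
    IsPathFrom o s t p₁ ∧ IsPathFrom o s t p₂ ∧ IsPathFrom o s t p₃ ∧
    (∀ x, x ∈ s :: p₁ → x ∈ s :: p₂ → x = s ∨ x = t) ∧
    (∀ x, x ∈ s :: p₁ → x ∈ s :: p₃ → x = s ∨ x = t) ∧
    (∀ x, x ∈ s :: p₂ → x ∈ s :: p₃ → x = s ∨ x = t)

/-- The dimension influence graph with non-loop edges (1,2) and (2,3) only
(dimensions 1,2,3 are represented by 0,1,2 : Fin 3). -/
def E₁ (d d' : Fin 3) : Prop :=
  d = d' ∨ (d = 0 ∧ d' = 1) ∨ (d = 1 ∧ d' = 2)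

/-!
Since `m ∅ = ∅` and crossing a `d`-edge toggles the outmap exactly on the out-neighbours of `d`,
`m v` consists of the `d'` having an odd number of in-neighbours in `v`. For `E₁` the source is
`{0, 2}` and the sink is `∅`. The source points to `{0}`, `{2}` and `{0, 1, 2}`, and the only way
down from `{0, 1, 2}` is `{0, 1, 2} → {1, 2} → {2}`. Hence `{0}, {2}` separates source and sink,
and two vertices cannot carry three internally disjoint paths.
-/

theorem Finset.symmDiff_singleton_of_notMem {α : Type*} [DecidableEq α] {a : α} {v : Finset α}
    (h : a ∉ v) : v ∆ {a} = insert a v := by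
  rw [(Finset.disjoint_singleton_right.2 h).symmDiff_eq_sup, Finset.sup_eq_union,
    Finset.union_comm, ← Finset.insert_eq]

section Matousek

variable {α : Type*} [Fintype α] [DecidableEq α]

def matousekOutmap (E : α → α → Prop) [DecidableRel E] (v : Finset α) : Finset α :=
  Finset.univ.filter fun d' => Odd (v.filter (E · d')).card

theorem eq_matousekOutmap {E : α → α → Prop} [DecidableRel E] {m : Finset α → Finset α}
    (h0 : m ∅ = ∅)
    (hmat : ∀ (d d' : α) (v : Finset α), (Xor (d' ∈ m v) (d' ∈ m (v ∆ {d})) ↔ E d d')) :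
    m = matousekOutmap E := by
  funext v
  induction v using Finset.induction_on with
  | empty => simp [h0, matousekOutmap]
  | insert a v ha ih =>
    ext d'
    have hflip : d' ∈ m (insert a v) ↔ ¬(d' ∈ m v ↔ E a d') := by
      have := hmat a d' v
      rw [Finset.symmDiff_singleton_of_notMem ha, xor_iff_not_iff] at this
      tauto
    have hcount : Odd ((insert a v).filter (E · d')).card ↔
        ¬(Odd (v.filter (E · d')).card ↔ E a d') := by
      by_cases hE : E a d'
      · rw [Finset.filter_insert, if_pos hE, Finset.card_insert_of_notMem (by simp [ha]),
          Nat.odd_add_one]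
        tauto
      · rw [Finset.filter_insert, if_neg hE]
        tauto
    simp only [hflip, ih, matousekOutmap, Finset.mem_filter, Finset.mem_univ, true_and, hcount]

end Matousek

theorem List.IsChain.exists_mem_of_head_mem_of_getLast_notMem {α : Type*} {R : α → α → Prop}
    {S X : Set α} (hS : ∀ v ∈ S, ∀ w, R v w → w ∈ S ∨ w ∈ X) {l : List α} (hl : l.IsChain R)
    (hne : l ≠ []) (hhead : l.head hne ∈ S) (hlast : l.getLast hne ∉ S) : ∃ x ∈ X, x ∈ l := by
  by_contra! hX
  have hlX : l.IsChain fun v w => R v w ∧ w ∉ X :=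
    hl.imp_of_mem_imp fun _ w _ hw hvw => ⟨hvw, fun hwX => hX w hwX hw⟩
  refine hlast (hlX.induction (· ∈ S) l ?_ (fun _ => hhead) _ (List.getLast_mem hne))
  exact fun v w ⟨hvw, hw⟩ hv => (hS v hv w hvw).resolve_right hw

theorem IsPathFrom.exists_mem_of_mem_of_notMem {o : Finset (Fin 3) → Finset (Fin 3)}
    {s t : Finset (Fin 3)} {p : List (Finset (Fin 3))} {S X : Set (Finset (Fin 3))}
    (hS : ∀ v ∈ S, ∀ w, Step o v w → w ∈ S ∨ w ∈ X) (hp : IsPathFrom o s t p) (hs : s ∈ S)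
    (ht : t ∉ S) : ∃ x ∈ X, x ∈ s :: p :=
  List.IsChain.exists_mem_of_head_mem_of_getLast_notMem hS hp.1 (List.cons_ne_nil s p) hs
    (hp.2 ▸ ht)

theorem not_threeDisjointPaths_of_separator {o : Finset (Fin 3) → Finset (Fin 3)}
    {s t x y : Finset (Fin 3)} (hx : ¬(x = s ∨ x = t)) (hy : ¬(y = s ∨ y = t))
    (hsep : ∀ p, IsPathFrom o s t p → x ∈ s :: p ∨ y ∈ s :: p) : ¬ThreeDisjointPaths o s t := by
  rintro ⟨p₁, p₂, p₃, h₁, h₂, h₃, h₁₂, h₁₃, h₂₃⟩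
  rcases hsep _ h₁ with h1 | h1 <;> rcases hsep _ h₂ with h2 | h2 <;>
    rcases hsep _ h₃ with h3 | h3 <;> grind

instance : DecidableRel E₁ := fun d d' => inferInstanceAs (Decidable (d = d' ∨ _))

theorem matousekOutmap_E₁_eq_univ_iff (v : Finset (Fin 3)) :
    matousekOutmap E₁ v = Finset.univ ↔ v = {0, 2} := by
  revert v; decide

theorem matousekOutmap_E₁_eq_empty_iff (v : Finset (Fin 3)) :
    matousekOutmap E₁ v = ∅ ↔ v = ∅ := by
  revert v; decide

theorem step_matousekOutmap_E₁_of_mem {v w : Finset (Fin 3)}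
    (hv : v ∈ ({{0, 2}, {0, 1, 2}, {1, 2}} : Set (Finset (Fin 3))))
    (hvw : Step (matousekOutmap E₁) v w) :
    w ∈ ({{0, 2}, {0, 1, 2}, {1, 2}} : Set (Finset (Fin 3))) ∨ w ∈ ({{0}, {2}} : Set _) := by
  obtain ⟨d, hd, rfl⟩ := hvw
  simp only [Set.mem_insert_iff, Set.mem_singleton_iff] at hv
  rcases hv with rfl | rfl | rfl <;> revert d <;> decide

theorem stmt10_general (m : Finset (Fin 3) → Finset (Fin 3))
    (h0 : m ∅ = ∅)
    (hmat : ∀ (d d' : Fin 3) (v : Finset (Fin 3)),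
      (Xor' (d' ∈ m v) (d' ∈ m (v ∆ {d})) ↔ E₁ d d')) :
    ∀ s t : Finset (Fin 3), m s = Finset.univ → m t = ∅ →
      ¬ ThreeDisjointPaths m s t := by
  obtain rfl : m = matousekOutmap E₁ := eq_matousekOutmap h0 hmat
  intro s t hs ht
  rw [matousekOutmap_E₁_eq_univ_iff] at hs
  rw [matousekOutmap_E₁_eq_empty_iff] at ht
  subst hs ht
  refine not_threeDisjointPaths_of_separator (x := {0}) (y := {2}) (by decide) (by decide)
    fun p hp => ?_
  obtain ⟨x, hx, hxp⟩ := hp.exists_mem_of_mem_of_notMem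
    (fun _ hv _ => step_matousekOutmap_E₁_of_mem hv) (by simp) (by decide)
  rcases hx with rfl | rfl
  exacts [.inl hxp, .inr hxp]

/-- The Matoušek USO `m₁` of the 3-cube with dimension influence graph a path
without its transitive edge admits no three vertex-disjoint directed paths
from its unique source to its unique sink. -/
theorem stmt10 (m : Finset (Fin 3) → Finset (Fin 3))
    (hor : IsOrientation m) (h0 : m ∅ = ∅)
    (hmat : ∀ (d d' : Fin 3) (v : Finset (Fin 3)),
      (Xor' (d' ∈ m v) (d' ∈ m (v ∆ {d})) ↔ E₁ d d')) :
    ∀ s t : Finset (Fin 3), m s = Finset.univ → m t = ∅ →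
      ¬ ThreeDisjointPaths m s t :=
  stmt10_general m h0 hmat
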